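/- Let R be a Dedekind domain and I ⊊ R an ideal. Let n > 1 and (x_1,…,x_n) ∈ R^n be such that (x_1)+⋯+(x_n)+I = R. Then R satisfies CMH for the tuple (x_1,…,x_n) with respect to I, i.e. there exist a_1,…,a_n ∈ R with (a_1)+⋯+(a_n) = R and a_1x_1+⋯+a_nx_n ∈ 1+I. -/
import Mathlib

open IsDedekindDomain

lemma cmh_aux_sum_span_eq_span_range {R : Type*} [CommRing R] {n : ℕ} (x : Fin n → R) :
    (∑ i, Ideal.span {x i}) = Ideal.span (Set.range x) := by
  apply le_antisymm
  · refine Finset.sum_induction _ (· ≤ Ideal.span (Set.range x)) (fun a b ha hb => ?_) bot_le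
      (fun i _ => Ideal.span_mono (Set.singleton_subset_iff.mpr ⟨i, rfl⟩))
    rw [Submodule.add_eq_sup]; exact sup_le ha hb
  · rw [Ideal.span_le]
    rintro _ ⟨i, rfl⟩
    exact Finset.single_le_sum (f := fun i => Ideal.span {x i}) (fun i _ => bot_le)
      (Finset.mem_univ i) (Ideal.mem_span_singleton_self (x i))

lemma cmh_aux_single_le {R : Type*} [CommRing R] {n : ℕ} (a : Fin n → R) (i : Fin n) :
    Ideal.span {a i} ≤ ∑ j, Ideal.span {a j} :=
  Finset.single_le_sum (f := fun j => Ideal.span {a j}) (fun j _ => bot_le) (Finset.mem_univ i)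



/-- Let `R` be a Dedekind domain and `I ⊊ R` an ideal. Let `n > 1` and
`(x_1,…,x_n) ∈ Rⁿ` with `(x_1) + ⋯ + (x_n) + I = R`. Then `R` satisfies the choice
multiplier hypothesis for `(x_1,…,x_n)` with respect to `I`: there exist `a_1, …, a_n ∈ R`
with `(a_1) + ⋯ + (a_n) = R` and `a_1 x_1 + ⋯ + a_n x_n ∈ 1 + I`. -/
theorem dedekind_satisfies_cmh {R : Type*} [CommRing R] [IsDedekindDomain R]
    (I : Ideal R) (hI : I ≠ ⊤) (n : ℕ) (hn : 1 < n) (x : Fin n → R)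
    (hx : (∑ i, Ideal.span {x i}) + I = ⊤) :
    ∃ a : Fin n → R, (∑ i, Ideal.span {a i} = ⊤) ∧ (∑ i, a i * x i) - 1 ∈ I := by
  classical
  set i0 : Fin n := ⟨0, by omega⟩ with hi0def
  set i1 : Fin n := ⟨1, hn⟩ with hi1def
  have h01 : i0 ≠ i1 := by simp [hi0def, hi1def, Fin.ext_iff]
  -- extract b, c with ∑ b i * x i + c = 1, c ∈ I
  rw [cmh_aux_sum_span_eq_span_range, Submodule.add_eq_sup] at hx
  have h1 : (1 : R) ∈ Ideal.span (Set.range x) ⊔ I := hx ▸ Submodule.mem_top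
  obtain ⟨y, hy, c, hc, hyc⟩ := Submodule.mem_sup.mp h1
  obtain ⟨b, hb⟩ := (Submodule.mem_span_range_iff_exists_fun R).mp hy
  simp only [smul_eq_mul] at hb
  by_cases hK : ∀ i : Fin n, i ≠ i0 → b i = 0
  · -- all other b_i are zero; use a = (b i0, c, 0, ..., 0)
    set a : Fin n → R := fun i => if i = i0 then b i0 else if i = i1 then c else 0 with ha
    have hb0 : b i0 * x i0 + c = 1 := by
      rw [← hyc, ← hb, Fintype.sum_eq_single i0 (fun i hi => by rw [hK i hi, zero_mul])]
    have hsum : (∑ i, a i * x i) = b i0 * x i0 + c * x i1 := by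
      have : ∀ i : Fin n, a i * x i
          = (if i = i0 then b i0 * x i0 else 0) + (if i = i1 then c * x i1 else 0) := by
        intro i
        rcases eq_or_ne i i0 with h | h
        · subst h; simp [ha, h01]
        · rcases eq_or_ne i i1 with h' | h'
          · subst h'; simp [ha, h]
          · simp [ha, h, h']
      rw [Finset.sum_congr rfl (fun i _ => this i), Finset.sum_add_distrib,
        Finset.sum_ite_eq' Finset.univ i0, Finset.sum_ite_eq' Finset.univ i1]
      simp
    refine ⟨a, ?_, ?_⟩
    · rw [Ideal.eq_top_iff_one, ← hb0]
      refine Ideal.add_mem _ (cmh_aux_single_le a i0 ?_) (cmh_aux_single_le a i1 ?_)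
      · rw [Ideal.mem_span_singleton]
        exact ⟨x i0, by simp [ha]⟩
      · simp only [ha, if_neg h01.symm, if_pos rfl]
        exact Ideal.mem_span_singleton_self c
    · rw [hsum]
      have : b i0 * x i0 + c * x i1 - 1 = c * x i1 - c := by rw [← hb0]; ring
      rw [this]
      exact I.sub_mem (I.mul_mem_right _ hc) hc
  · -- K := span of b i, i ≠ i0, nonzero
    push_neg at hK
    obtain ⟨j₀, hj₀ne, hj₀⟩ := hK
    set K : Ideal R := ∑ i ∈ Finset.univ.erase i0, Ideal.span {b i} with hKdef
    have hKne : K ≠ ⊥ := by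
      intro h
      apply hj₀
      have hle : Ideal.span {b j₀} ≤ K :=
        Finset.single_le_sum (f := fun i => Ideal.span {b i}) (fun i _ => bot_le)
          (Finset.mem_erase.mpr ⟨hj₀ne, Finset.mem_univ _⟩)
      rw [h, le_bot_iff, Ideal.span_singleton_eq_bot] at hle
      exact hle
    have hfin := Ideal.finite_factors hKne
    set S := hfin.toFinset with hS
    obtain ⟨t, ht⟩ := IsDedekindDomain.exists_forall_sub_mem_ideal (s := S)
      (fun v => v.asIdeal) (fun _ => 1)
      (fun v _ => Ideal.prime_of_isPrime v.ne_bot v.isPrime)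
      (fun v _ w _ hvw => fun h => hvw (HeightOneSpectrum.ext h))
      (fun v => if b i0 ∈ (v : HeightOneSpectrum R).asIdeal then 1 else 0)
    set a : Fin n → R := fun i => if i = i0 then b i0 + t * c else b i with ha
    refine ⟨a, ?_, ?_⟩
    · by_contra htop
      obtain ⟨m, hm, hle⟩ := Ideal.exists_le_maximal _ htop
      have hbm : ∀ i : Fin n, i ≠ i0 → b i ∈ m := by
        intro i hi
        have h2 : a i ∈ m := hle (cmh_aux_single_le a i (Ideal.mem_span_singleton_self _))
        simpa [ha, hi] using h2
      have ha0m : b i0 + t * c ∈ m := by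
        have h2 : a i0 ∈ m := hle (cmh_aux_single_le a i0 (Ideal.mem_span_singleton_self _))
        simpa [ha] using h2
      have hKm : K ≤ m := by
        refine Finset.sum_induction _ (· ≤ m) (fun p q hp hq => ?_) bot_le ?_
        · rw [Submodule.add_eq_sup]; exact sup_le hp hq
        · intro i hi
          rw [Ideal.span_le, Set.singleton_subset_iff]
          exact hbm i (Finset.mem_erase.mp hi).1
      have hmne : m ≠ ⊥ := fun h => hKne (le_bot_iff.mp (h ▸ hKm))
      set v : HeightOneSpectrum R := ⟨m, hm.isPrime, hmne⟩ with hv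
      have hvS : v ∈ S := by
        rw [hS, Set.Finite.mem_toFinset]
        exact (Ideal.dvd_iff_le).mpr hKm
      have htv := ht v hvS
      simp only [pow_one] at htv
      by_cases hb0 : b i0 ∈ m
      · -- t ≡ 1 mod m, c ∉ m
        have hcm : c ∉ m := by
          intro hcm
          apply hm.ne_top
          rw [Ideal.eq_top_iff_one, ← hyc, ← hb]
          refine m.add_mem (Ideal.sum_mem _ fun i _ => ?_) hcm
          rcases eq_or_ne i i0 with h | h
          · subst h; exact m.mul_mem_right _ hb0
          · exact m.mul_mem_right _ (hbm i h)
        have htm : t ∉ m := by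
          intro htm
          apply hm.ne_top
          rw [Ideal.eq_top_iff_one]
          have h3 : t - 1 ∈ m := by simpa [hv, hb0] using htv
          simpa using m.sub_mem htm h3
        have h4 : t * c ∈ m := by simpa using m.sub_mem ha0m hb0
        rcases hm.isPrime.mem_or_mem h4 with h | h
        · exact htm h
        · exact hcm h
      · -- t ≡ 0 mod m
        have htm : t ∈ m := by simpa [hv, hb0] using htv
        apply hb0
        have h5 : b i0 = (b i0 + t * c) - t * c := by ring
        rw [h5]
        exact m.sub_mem ha0m (m.mul_mem_right _ htm)
    · have hsum : (∑ i, a i * x i) = (∑ i, b i * x i) + t * c * x i0 := by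
        have : ∀ i : Fin n, a i * x i = b i * x i + (if i = i0 then t * c * x i0 else 0) := by
          intro i
          rcases eq_or_ne i i0 with h | h
          · subst h; simp [ha]; ring
          · simp [ha, h]
        rw [Finset.sum_congr rfl (fun i _ => this i), Finset.sum_add_distrib,
          Finset.sum_ite_eq' Finset.univ i0]
        simp
      rw [hsum, hb]
      have h6 : y + t * c * x i0 - 1 = t * c * x i0 - c := by rw [← hyc]; ring
      rw [h6]
      exact I.sub_mem (I.mul_mem_right _ (I.mul_mem_left t hc)) hc
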